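/- arXiv:2206.14864 — 2 statements merged into one kernel-verified Lean document; each statement's English description precedes it below -/
import Mathlib

section
/- Let X be a Polish space, R ⊆ C_b(X) a subring that approximates open sets, V a normed R-module and F ∈ V'. Then F is tight with respect to R if and only if there exists a finite Borel measure μ on X such that for every open set A ⊆ X one has μ(A) = sup{F(v) : v ∈ V, ‖v‖ ≤ 1, supp v ⊆ A}. -/
open BoundedContinuousFunction Filter Topology Set MeasureTheory ENNReal

noncomputable section

/-- A subring `R ⊆ C_b(X)` approximates open sets. -/
structure ApproximatesOpenSets {X : Type*} [TopologicalSpace X] (R : Subring (X →ᵇ ℝ)) : Prop where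
  const_mem : ∀ c : ℝ, const X c ∈ R
  sup_mem : ∀ f g : X →ᵇ ℝ, f ∈ R → g ∈ R → ∃ h ∈ R, ∀ x, h x = max (f x) (g x)
  inf_mem : ∀ f g : X →ᵇ ℝ, f ∈ R → g ∈ R → ∃ h ∈ R, ∀ x, h x = min (f x) (g x)
  const_mul_mem : ∀ (c : ℝ) (f : X →ᵇ ℝ), f ∈ R → const X c * f ∈ R
  approx : ∀ A : Set X, IsOpen A →
    ∃ f : ℕ → X →ᵇ ℝ, (∀ k, f k ∈ R) ∧ (∀ x, Monotone fun k => f k x) ∧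
      ∀ x, Tendsto (fun k => f k x) atTop (𝓝 (A.indicator (fun _ => (1:ℝ)) x))

/-- The action of constant functions in `R` agrees with the real scalar multiplication. -/
def ConstSMulCompat {X : Type*} [TopologicalSpace X] (R : Subring (X →ᵇ ℝ)) (V : Type*)
    [NormedAddCommGroup V] [NormedSpace ℝ V] [Module R V] : Prop :=
  ∀ (c : ℝ) (hc : const X c ∈ R) (v : V), (⟨const X c, hc⟩ : ↥R) • v = c • v

/-- The compatibility inequality defining a normed `R`-module. -/
def NormSMulCompat {X : Type*} [TopologicalSpace X] (R : Subring (X →ᵇ ℝ)) (V : Type*)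
    [NormedAddCommGroup V] [Module R V] : Prop :=
  ∀ (s : Finset ℕ) (f : ℕ → ↥R) (v : ℕ → V) (M K : ℝ), 0 ≤ M → 0 ≤ K →
    ((s : Set ℕ).Pairwise fun i j =>
      Disjoint (tsupport ⇑((f i : X →ᵇ ℝ))) (tsupport ⇑((f j : X →ᵇ ℝ)))) →
    (∀ i ∈ s, ‖(f i : X →ᵇ ℝ)‖ ≤ M) → (∀ i ∈ s, ‖v i‖ ≤ K) →
    ‖∑ i ∈ s, f i • v i‖ ≤ M * K

/-- The local seminorm `‖v‖_{|A}`. -/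
def locNorm {X : Type*} [TopologicalSpace X] (R : Subring (X →ᵇ ℝ)) {V : Type*}
    [NormedAddCommGroup V] [Module R V] (A : Set X) (v : V) : ℝ :=
  sSup {r : ℝ | ∃ f : ↥R, tsupport ⇑((f : X →ᵇ ℝ)) ⊆ A ∧ ‖(f : X →ᵇ ℝ)‖ ≤ 1 ∧ r = ‖f • v‖}

/-- The germ seminorm `|v|_g(x)`. -/
def germNorm {X : Type*} [TopologicalSpace X] (R : Subring (X →ᵇ ℝ)) {V : Type*}
    [NormedAddCommGroup V] [Module R V] (v : V) (x : X) : ℝ :=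
  sInf {r : ℝ | ∃ A : Set X, IsOpen A ∧ x ∈ A ∧ r = locNorm R A v}

/-- `supp v ⊆ B`: there is a closed set `C ⊆ B` with `‖v‖_{|X∖C} = 0`. -/
def suppIn {X : Type*} [TopologicalSpace X] (R : Subring (X →ᵇ ℝ)) {V : Type*}
    [NormedAddCommGroup V] [Module R V] (v : V) (B : Set X) : Prop :=
  ∃ C : Set X, IsClosed C ∧ C ⊆ B ∧ locNorm R Cᶜ v = 0

/-- σ-additivity, with convergence of the partial sums in norm. -/
def SigmaAdditive {X : Type*} [MeasurableSpace X] {E : Type*} [NormedAddCommGroup E]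
    (N : Set X → E) : Prop :=
  ∀ A : ℕ → Set X, (∀ n, MeasurableSet (A n)) → Pairwise (Function.onFun Disjoint A) →
    Tendsto (fun n => ∑ k ∈ Finset.range n, N (A k)) atTop (𝓝 (N (⋃ k, A k)))

/-- A local vector measure on the normed `R`-module `V`. -/
structure IsLocalVectorMeasure {X : Type*} [TopologicalSpace X] [MeasurableSpace X]
    (R : Subring (X →ᵇ ℝ)) {V : Type*} [NormedAddCommGroup V] [NormedSpace ℝ V] [Module R V]
    (N : Set X → V →L[ℝ] ℝ) : Prop where
  sigma_additive : SigmaAdditive N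
  weakly_local : ∀ A : Set X, IsOpen A → ∀ v : V, locNorm R A v = 0 → N A v = 0

/-- The total variation `|N|(B)`, as the supremum of `Σ ‖N(A_i)‖` over finite Borel
partitions of `B`. -/
def totalVar {X : Type*} [MeasurableSpace X] {E : Type*} [NormedAddCommGroup E]
    (N : Set X → E) (B : Set X) : ℝ≥0∞ :=
  ⨆ (n : ℕ) (A : Fin n → Set X)
    (_ : (∀ i, MeasurableSet (A i)) ∧ Pairwise (Function.onFun Disjoint A) ∧ (⋃ i, A i) = B),
      ∑ i, (‖N (A i)‖₊ : ℝ≥0∞)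

/-- Tightness of a functional `F ∈ V'` with respect to `R`. -/
def IsTight {X : Type*} [TopologicalSpace X] (R : Subring (X →ᵇ ℝ)) {V : Type*}
    [NormedAddCommGroup V] [NormedSpace ℝ V] [Module R V] (F : V →L[ℝ] ℝ) : Prop :=
  ∀ (v : V) (f : ℕ → ↥R),
    (∀ x, Antitone fun n => ((f n : X →ᵇ ℝ)) x) →
    (∀ x, Tendsto (fun n => ((f n : X →ᵇ ℝ)) x) atTop (𝓝 (0:ℝ))) →
    Tendsto (fun n => F ((f n) • v)) atTop (𝓝 (0:ℝ))

set_option linter.unusedSectionVars false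
set_option maxHeartbeats 1000000

section Aux

variable {X : Type*} [MetricSpace X] {V : Type*} [NormedAddCommGroup V]
  [NormedSpace ℝ V] {R : Subring (X →ᵇ ℝ)} [Module R V]

theorem myNormSmulLe (hnorm : NormSMulCompat R V) (f : ↥R) (v : V) :
    ‖f • v‖ ≤ ‖(f : X →ᵇ ℝ)‖ * ‖v‖ := by
  have := hnorm {0} (fun _ => f) (fun _ => v) ‖(f : X →ᵇ ℝ)‖ ‖v‖ (norm_nonneg _) (norm_nonneg _)
    (by simp) (by simp) (by simp)
  simpa using this

theorem zero_mem_locSet (A : Set X) (v : V) :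
    (0:ℝ) ∈ {r : ℝ | ∃ f : ↥R, tsupport ⇑((f : X →ᵇ ℝ)) ⊆ A ∧ ‖(f : X →ᵇ ℝ)‖ ≤ 1 ∧ r = ‖f • v‖} := by
  refine ⟨0, ?_, ?_, ?_⟩
  · simp [tsupport]
  · simp
  · rw [zero_smul, norm_zero]

theorem bddAbove_locSet (hnorm : NormSMulCompat R V) (A : Set X) (v : V) :
    BddAbove {r : ℝ | ∃ f : ↥R, tsupport ⇑((f : X →ᵇ ℝ)) ⊆ A ∧ ‖(f : X →ᵇ ℝ)‖ ≤ 1 ∧ r = ‖f • v‖} := by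
  refine ⟨‖v‖, ?_⟩
  rintro r ⟨f, -, hf1, rfl⟩
  calc ‖f • v‖ ≤ ‖(f : X →ᵇ ℝ)‖ * ‖v‖ := myNormSmulLe hnorm f v
  _ ≤ 1 * ‖v‖ := mul_le_mul_of_nonneg_right hf1 (norm_nonneg v)
  _ = ‖v‖ := one_mul _

theorem smul_eq_zero_of_locNorm (hnorm : NormSMulCompat R V) {A : Set X} {v : V}
    (h : locNorm R A v = 0) (f : ↥R) (hfA : tsupport ⇑((f : X →ᵇ ℝ)) ⊆ A)
    (hf1 : ‖(f : X →ᵇ ℝ)‖ ≤ 1) : f • v = 0 := by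
  have hmem : ‖f • v‖ ∈ {r : ℝ | ∃ f : ↥R, tsupport ⇑((f : X →ᵇ ℝ)) ⊆ A ∧ ‖(f : X →ᵇ ℝ)‖ ≤ 1 ∧ r = ‖f • v‖} :=
    ⟨f, hfA, hf1, rfl⟩
  have := le_csSup (bddAbove_locSet hnorm A v) hmem
  rw [locNorm] at h
  rw [h] at this
  exact norm_le_zero_iff.1 this

theorem locNorm_eq_zero_of {A : Set X} {v : V}
    (h : ∀ f : ↥R, tsupport ⇑((f : X →ᵇ ℝ)) ⊆ A → ‖(f : X →ᵇ ℝ)‖ ≤ 1 → ‖f • v‖ = 0) :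
    locNorm R A v = 0 := by
  have hset : {r : ℝ | ∃ f : ↥R, tsupport ⇑((f : X →ᵇ ℝ)) ⊆ A ∧ ‖(f : X →ᵇ ℝ)‖ ≤ 1 ∧ r = ‖f • v‖}
      = {(0:ℝ)} := by
    apply Set.eq_singleton_iff_unique_mem.mpr
    refine ⟨zero_mem_locSet A v, ?_⟩
    rintro r ⟨f, h1, h2, rfl⟩
    exact h f h1 h2
  rw [locNorm, hset, csSup_singleton]

theorem subring_mul_eq_zero {f g : ↥R}
    (h : ∀ x, ((f : X →ᵇ ℝ)) x = 0 ∨ ((g : X →ᵇ ℝ)) x = 0) : f * g = 0 := by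
  apply Subtype.ext
  show ((f : X →ᵇ ℝ) * (g : X →ᵇ ℝ)) = 0
  ext x
  rcases h x with h' | h' <;> simp [h']

theorem suppIn_smul (f : ↥R) (v : V) {B : Set X} (hB : tsupport ⇑((f : X →ᵇ ℝ)) ⊆ B) :
    suppIn R (f • v) B := by
  refine ⟨tsupport ⇑((f : X →ᵇ ℝ)), isClosed_closure, hB, locNorm_eq_zero_of fun g hg _ => ?_⟩
  have hfg : g * f = 0 := by
    apply subring_mul_eq_zero
    intro x
    by_cases hx : ((g : X →ᵇ ℝ)) x = 0
    · exact Or.inl hx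
    · refine Or.inr ?_
      have hxg : x ∈ tsupport ⇑((g : X →ᵇ ℝ)) := subset_closure hx
      have : x ∉ tsupport ⇑((f : X →ᵇ ℝ)) := hg hxg
      exact image_eq_zero_of_notMem_tsupport this
  rw [← mul_smul, hfg, zero_smul, norm_zero]

theorem suppIn_mono {v : V} {A B : Set X} (h : A ⊆ B) (hv : suppIn R v A) : suppIn R v B := by
  obtain ⟨C, h1, h2, h3⟩ := hv
  exact ⟨C, h1, h2.trans h, h3⟩

theorem smul_real_comm (hR : ApproximatesOpenSets R) (hconst : ConstSMulCompat R V)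
    (f : ↥R) (c : ℝ) (v : V) : f • (c • v) = c • (f • v) := by
  have hc := hR.const_mem c
  rw [← hconst c hc v, ← mul_smul, mul_comm, mul_smul, hconst c hc]

theorem suppIn_realSMul (hR : ApproximatesOpenSets R) (hconst : ConstSMulCompat R V)
    (hnorm : NormSMulCompat R V) (c : ℝ) {v : V} {B : Set X} (h : suppIn R v B) :
    suppIn R (c • v) B := by
  obtain ⟨C, hC, hCB, hlz⟩ := h
  refine ⟨C, hC, hCB, locNorm_eq_zero_of fun g hg hg1 => ?_⟩
  rw [smul_real_comm hR hconst, smul_eq_zero_of_locNorm hnorm hlz g hg hg1, smul_zero, norm_zero]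

end Aux


section Aux2

variable {X : Type*} [MetricSpace X] {V : Type*} [NormedAddCommGroup V]
  [NormedSpace ℝ V] {R : Subring (X →ᵇ ℝ)} [Module R V]

/-- The set of values defining the sup. -/
def sigSet (R : Subring (X →ᵇ ℝ)) [Module R V] (F : V →L[ℝ] ℝ) (A : Set X) : Set ℝ :=
  {r : ℝ | ∃ v : V, ‖v‖ ≤ 1 ∧ suppIn R v A ∧ r = F v}

def sigF (R : Subring (X →ᵇ ℝ)) [Module R V] (F : V →L[ℝ] ℝ) (A : Set X) : ℝ :=
  sSup (sigSet R F A)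

theorem zero_mem_sigSet (F : V →L[ℝ] ℝ) (A : Set X) : (0:ℝ) ∈ sigSet R F A := by
  refine ⟨0, by simp, ⟨∅, isClosed_empty, empty_subset A, locNorm_eq_zero_of fun f _ _ => by
    rw [smul_zero, norm_zero]⟩, by simp⟩

theorem bddAbove_sigSet (F : V →L[ℝ] ℝ) (A : Set X) : BddAbove (sigSet R F A) := by
  refine ⟨‖F‖, ?_⟩
  rintro r ⟨v, hv, -, rfl⟩
  calc F v ≤ ‖F v‖ := le_abs_self _
  _ ≤ ‖F‖ * ‖v‖ := F.le_opNorm v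
  _ ≤ ‖F‖ * 1 := mul_le_mul_of_nonneg_left hv (norm_nonneg F)
  _ = ‖F‖ := mul_one _

theorem le_sigF_of_mem {F : V →L[ℝ] ℝ} {A : Set X} {r : ℝ} (h : r ∈ sigSet R F A) :
    r ≤ sigF R F A := le_csSup (bddAbove_sigSet F A) h

theorem sigF_nonneg (F : V →L[ℝ] ℝ) (A : Set X) : 0 ≤ sigF R F A :=
  le_sigF_of_mem (zero_mem_sigSet F A)

theorem sigF_le_opNorm (F : V →L[ℝ] ℝ) (A : Set X) : sigF R F A ≤ ‖F‖ := by
  apply csSup_le ⟨0, zero_mem_sigSet F A⟩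
  rintro r ⟨v, hv, -, rfl⟩
  calc F v ≤ ‖F v‖ := le_abs_self _
  _ ≤ ‖F‖ * ‖v‖ := F.le_opNorm v
  _ ≤ ‖F‖ * 1 := mul_le_mul_of_nonneg_left hv (norm_nonneg F)
  _ = ‖F‖ := mul_one _

theorem sigF_mono (F : V →L[ℝ] ℝ) {A B : Set X} (h : A ⊆ B) : sigF R F A ≤ sigF R F B := by
  apply csSup_le_csSup (bddAbove_sigSet F B) ⟨0, zero_mem_sigSet F A⟩
  rintro r ⟨v, hv, hs, rfl⟩
  exact ⟨v, hv, suppIn_mono h hs, rfl⟩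

theorem sigF_empty {F : V →L[ℝ] ℝ} (hnorm : NormSMulCompat R V) : sigF R F (∅ : Set X) = 0 := by
  have hset : sigSet R F (∅ : Set X) = {(0:ℝ)} := by
    apply Set.eq_singleton_iff_unique_mem.mpr
    refine ⟨zero_mem_sigSet F ∅, ?_⟩
    rintro r ⟨v, hv, ⟨C, hC, hCe, hl⟩, rfl⟩
    have hCempty : C = ∅ := subset_empty_iff.1 hCe
    have h1 : (1 : ↥R) • v = 0 := by
      apply smul_eq_zero_of_locNorm hnorm (A := Cᶜ) hl 1
      · rw [hCempty, compl_empty]; exact subset_univ _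
      · apply (BoundedContinuousFunction.norm_le zero_le_one).2
        intro x
        show ‖(1:ℝ)‖ ≤ 1
        simp
    rw [one_smul] at h1
    rw [h1, map_zero]
  rw [sigF, hset, csSup_singleton]

theorem abs_F_le (hR : ApproximatesOpenSets R) (hconst : ConstSMulCompat R V)
    (hnorm : NormSMulCompat R V) {F : V →L[ℝ] ℝ} {w : V} {A : Set X} (h : suppIn R w A) :
    |F w| ≤ ‖w‖ * sigF R F A := by
  rcases eq_or_ne w 0 with rfl | hw
  · simp
  · have hnw : 0 < ‖w‖ := norm_pos_iff.2 hw
    have hmem1 : F (‖w‖⁻¹ • w) ∈ sigSet R F A := by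
      refine ⟨‖w‖⁻¹ • w, ?_, suppIn_realSMul hR hconst hnorm _ h, rfl⟩
      rw [norm_smul, norm_inv, norm_norm, inv_mul_cancel₀ hnw.ne']
    have hmem2 : F ((-‖w‖⁻¹) • w) ∈ sigSet R F A := by
      refine ⟨(-‖w‖⁻¹) • w, ?_, suppIn_realSMul hR hconst hnorm _ h, rfl⟩
      rw [norm_smul, norm_neg, norm_inv, norm_norm, inv_mul_cancel₀ hnw.ne']
    have h1 := le_sigF_of_mem hmem1
    have h2 := le_sigF_of_mem hmem2
    rw [F.map_smul, smul_eq_mul] at h1 h2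
    have e1 : ‖w‖ * (‖w‖⁻¹ * F w) = F w := by field_simp
    have e2 : ‖w‖ * (-‖w‖⁻¹ * F w) = -F w := by rw [neg_mul, mul_neg, e1]
    have g1 := mul_le_mul_of_nonneg_left h1 hnw.le
    have g2 := mul_le_mul_of_nonneg_left h2 hnw.le
    rw [e1] at g1
    rw [e2] at g2
    rw [abs_le]
    constructor <;> linarith

theorem inf_mem' (hR : ApproximatesOpenSets R) {f g : X →ᵇ ℝ} (hf : f ∈ R) (hg : g ∈ R) :
    f ⊓ g ∈ R := by
  obtain ⟨h, hm, hx⟩ := hR.inf_mem f g hf hg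
  have : h = f ⊓ g := by ext x; exact hx x
  rwa [this] at hm

theorem sup_mem' (hR : ApproximatesOpenSets R) {f g : X →ᵇ ℝ} (hf : f ∈ R) (hg : g ∈ R) :
    f ⊔ g ∈ R := by
  obtain ⟨h, hm, hx⟩ := hR.sup_mem f g hf hg
  have : h = f ⊔ g := by ext x; exact hx x
  rwa [this] at hm

theorem approxSeq (hR : ApproximatesOpenSets R) {A : Set X} (hA : IsOpen A) :
    ∃ f : ℕ → ↥R,
      (∀ k x, 0 ≤ ((f k : X →ᵇ ℝ)) x) ∧
      (∀ k x, ((f k : X →ᵇ ℝ)) x ≤ 1) ∧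
      (∀ x, Monotone fun k => ((f k : X →ᵇ ℝ)) x) ∧
      (∀ x ∈ A, Tendsto (fun k => ((f k : X →ᵇ ℝ)) x) atTop (𝓝 1)) ∧
      (∀ k x, x ∉ A → ((f k : X →ᵇ ℝ)) x = 0) := by
  obtain ⟨g, hgR, hgmono, hgt⟩ := hR.approx A hA
  refine ⟨fun k => ⟨(g k ⊓ 1) ⊔ 0, sup_mem' hR (inf_mem' hR (hgR k) R.one_mem) R.zero_mem⟩,
    ?_, ?_, ?_, ?_, ?_⟩
  · intro k x; exact le_max_right _ _
  · intro k x; exact max_le (min_le_right _ _) zero_le_one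
  · intro x k l hkl
    exact max_le_max (min_le_min (hgmono x hkl) le_rfl) le_rfl
  · intro x hx
    have : Tendsto (fun k => max (min (g k x) 1) 0) atTop
        (𝓝 (max (min (A.indicator (fun _ => (1:ℝ)) x) 1) 0)) :=
      ((hgt x).min tendsto_const_nhds).max tendsto_const_nhds
    rwa [Set.indicator_of_mem hx, min_self, max_eq_left zero_le_one] at this
  · intro k x hx
    have hmono : Monotone fun k => max (min (g k x) 1) 0 := fun k l hkl =>
      max_le_max (min_le_min (hgmono x hkl) le_rfl) le_rfl
    have hlim : Tendsto (fun k => max (min (g k x) 1) 0) atTop (𝓝 0) := by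
      have : Tendsto (fun k => max (min (g k x) 1) 0) atTop
          (𝓝 (max (min (A.indicator (fun _ => (1:ℝ)) x) 1) 0)) :=
        ((hgt x).min tendsto_const_nhds).max tendsto_const_nhds
      rwa [Set.indicator_of_notMem hx, min_eq_left zero_le_one, max_self] at this
    have h1 : max (min (g k x) 1) 0 ≤ 0 := hmono.ge_of_tendsto hlim k
    exact le_antisymm h1 (le_max_right _ _)

theorem norm_coe_le_one {f : ↥R} (h0 : ∀ x, 0 ≤ ((f : X →ᵇ ℝ)) x)
    (h1 : ∀ x, ((f : X →ᵇ ℝ)) x ≤ 1) : ‖(f : X →ᵇ ℝ)‖ ≤ 1 :=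
  (BoundedContinuousFunction.norm_le zero_le_one).2 fun x => by
    rw [Real.norm_eq_abs, abs_le]; exact ⟨by linarith [h0 x], h1 x⟩

/-- THE core lemma: tightness upgrades pointwise monotone convergence to `1` on a
neighborhood of the support into convergence of `F (s k • v)` to `F v`. -/
theorem core (hR : ApproximatesOpenSets R) (hnorm : NormSMulCompat R V) {F : V →L[ℝ] ℝ}
    (htight : IsTight R F) {v : V} {C : Set X} (hC : IsClosed C)
    (hloc : locNorm R Cᶜ v = 0) {W : Set X} (hW : IsOpen W) (hCW : C ⊆ W)
    (s : ℕ → ↥R) (hs0 : ∀ k x, 0 ≤ ((s k : X →ᵇ ℝ)) x) (hs1 : ∀ k x, ((s k : X →ᵇ ℝ)) x ≤ 1)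
    (hsm : ∀ x, Monotone fun k => ((s k : X →ᵇ ℝ)) x)
    (hst : ∀ x ∈ W, Tendsto (fun k => ((s k : X →ᵇ ℝ)) x) atTop (𝓝 1)) :
    Tendsto (fun k => F ((s k) • v)) atTop (𝓝 (F v)) := by
  obtain ⟨U, hUo, hCU, hUW⟩ := normal_exists_closure_subset hC hW hCW
  obtain ⟨e, he0, he1, hem, het, hev⟩ := approxSeq hR (isClosed_closure (s := U)).isOpen_compl
  set r : ℕ → ↥R := fun k => ⟨((1 : X →ᵇ ℝ) - ((s k : X →ᵇ ℝ))) ⊓ ((1 : X →ᵇ ℝ) - ((e k : X →ᵇ ℝ))),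
    inf_mem' hR (sub_mem R.one_mem (s k).2) (sub_mem R.one_mem (e k).2)⟩ with hrdef
  have hrval : ∀ k x, ((r k : X →ᵇ ℝ)) x
      = min (1 - ((s k : X →ᵇ ℝ)) x) (1 - ((e k : X →ᵇ ℝ)) x) := fun k x => rfl
  -- tightness applies to r
  have hrant : ∀ x, Antitone fun k => ((r k : X →ᵇ ℝ)) x := by
    intro x k l hkl
    simp only [hrval]
    exact min_le_min (by linarith [hsm x hkl]) (by linarith [hem x hkl])
  have hrt : ∀ x, Tendsto (fun k => ((r k : X →ᵇ ℝ)) x) atTop (𝓝 0) := by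
    intro x
    have hlow : ∀ k, 0 ≤ ((r k : X →ᵇ ℝ)) x := by
      intro k
      rw [hrval k x]
      exact le_min (by linarith [hs1 k x]) (by linarith [he1 k x])
    by_cases hx : x ∈ closure U
    · apply squeeze_zero hlow (fun k => (hrval k x).le.trans (min_le_left _ _))
      have := hst x (hUW hx)
      have h' : Tendsto (fun k => 1 - ((s k : X →ᵇ ℝ)) x) atTop (𝓝 (1 - 1)) :=
        tendsto_const_nhds.sub this
      simpa using h'
    · apply squeeze_zero hlow (fun k => (hrval k x).le.trans (min_le_right _ _))
      have := het x hx
      have h' : Tendsto (fun k => 1 - ((e k : X →ᵇ ℝ)) x) atTop (𝓝 (1 - 1)) :=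
        tendsto_const_nhds.sub this
      simpa using h'
  have hFr : Tendsto (fun k => F ((r k) • v)) atTop (𝓝 0) := htight v r hrant hrt
  -- φ k • v = 0
  set φ : ℕ → ↥R := fun k => (1 - s k) - r k with hφdef
  have hφval : ∀ k x, ((φ k : X →ᵇ ℝ)) x
      = (1 - ((s k : X →ᵇ ℝ)) x) - min (1 - ((s k : X →ᵇ ℝ)) x) (1 - ((e k : X →ᵇ ℝ)) x) := by
    intro k x
    show ((((1 - s k : ↥R) : X →ᵇ ℝ)) - ((r k : X →ᵇ ℝ))) x = _
    have h1 : (((1 - s k : ↥R) : X →ᵇ ℝ)) = (1 : X →ᵇ ℝ) - ((s k : X →ᵇ ℝ)) := rfl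
    rw [BoundedContinuousFunction.sub_apply, h1, BoundedContinuousFunction.sub_apply, hrval]
    rfl
  have hφv : ∀ k, (φ k) • v = 0 := by
    intro k
    apply smul_eq_zero_of_locNorm hnorm hloc
    · -- tsupport φ k ⊆ Cᶜ
      have hsupp : Function.support ⇑((φ k : X →ᵇ ℝ)) ⊆ (closure U)ᶜ := by
        intro x hx
        rw [Function.mem_support, hφval] at hx
        intro hxU
        have he : ((e k : X →ᵇ ℝ)) x = 0 := hev k x (by simpa using hxU)
        rw [he] at hx
        simp only [sub_zero] at hx
        exact hx (by rw [min_eq_left (by linarith [hs0 k x])]; ring)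
      have h2 : tsupport ⇑((φ k : X →ᵇ ℝ)) ⊆ Uᶜ := by
        apply closure_minimal (hsupp.trans (compl_subset_compl.2 subset_closure)) hUo.isClosed_compl
      exact h2.trans (compl_subset_compl.2 hCU)
    · apply norm_coe_le_one
      · intro x; rw [hφval]; simp [min_le_left]
      · intro x
        rw [hφval]
        rcases le_total (1 - ((s k : X →ᵇ ℝ)) x) (1 - ((e k : X →ᵇ ℝ)) x) with h | h
        · rw [min_eq_left h]; linarith
        · rw [min_eq_right h]; linarith [he1 k x, hs0 k x]
  have key : ∀ k, F v - F ((s k) • v) = F ((r k) • v) := by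
    intro k
    have h1 : (1 - s k : ↥R) = r k + φ k := by ring
    have h2 : (1 - s k : ↥R) • v = (r k) • v := by
      rw [h1, add_smul, hφv, add_zero]
    have h3 : v - (s k) • v = (1 - s k : ↥R) • v := by
      rw [sub_smul, one_smul]
    rw [← map_sub, h3, h2]
  have : (fun k => F ((s k) • v)) = fun k => F v - F ((r k) • v) := by
    funext k
    linarith [key k]
  rw [this]
  simpa using tendsto_const_nhds.sub hFr

end Aux2

section Aux3

variable {X : Type*} [MetricSpace X] {V : Type*} [NormedAddCommGroup V]
  [NormedSpace ℝ V] {R : Subring (X →ᵇ ℝ)} [Module R V]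

theorem tsupport_approx_subset {f : ↥R} {A : Set X}
    (hv : ∀ x, x ∉ A → ((f : X →ᵇ ℝ)) x = 0) : tsupport ⇑((f : X →ᵇ ℝ)) ⊆ closure A :=
  closure_mono fun x hx => by_contra fun h => hx (hv x h)

theorem sigF_superadd (hR : ApproximatesOpenSets R) (hnorm : NormSMulCompat R V) {F : V →L[ℝ] ℝ}
    (htight : IsTight R F) {A₁ A₂ : Set X} (h1 : IsOpen A₁) (h2 : IsOpen A₂)
    (hd : Disjoint A₁ A₂) : sigF R F A₁ + sigF R F A₂ ≤ sigF R F (A₁ ∪ A₂) := by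
  have key : ∀ r₁ ∈ sigSet R F A₁, ∀ r₂ ∈ sigSet R F A₂, r₁ + r₂ ≤ sigF R F (A₁ ∪ A₂) := by
    rintro r₁ ⟨v₁, hv₁, ⟨C₁, hC₁, hC₁A, hl₁⟩, rfl⟩ r₂ ⟨v₂, hv₂, ⟨C₂, hC₂, hC₂A, hl₂⟩, rfl⟩
    obtain ⟨U₁, hU₁o, hCU₁, hU₁A⟩ := normal_exists_closure_subset hC₁ h1 hC₁A
    obtain ⟨U₂, hU₂o, hCU₂, hU₂A⟩ := normal_exists_closure_subset hC₂ h2 hC₂A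
    obtain ⟨f, hf0, hf1, hfm, hft, hfv⟩ := approxSeq hR hU₁o
    obtain ⟨g, hg0, hg1, hgm, hgt, hgv⟩ := approxSeq hR hU₂o
    have hFf := core hR hnorm htight hC₁ hl₁ hU₁o hCU₁ f hf0 hf1 hfm (fun x hx => hft x hx)
    have hFg := core hR hnorm htight hC₂ hl₂ hU₂o hCU₂ g hg0 hg1 hgm (fun x hx => hgt x hx)
    have hsf : ∀ k, tsupport ⇑((f k : X →ᵇ ℝ)) ⊆ closure U₁ := fun k =>
      tsupport_approx_subset (hfv k)
    have hsg : ∀ k, tsupport ⇑((g k : X →ᵇ ℝ)) ⊆ closure U₂ := fun k =>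
      tsupport_approx_subset (hgv k)
    have hdisj : ∀ k, Disjoint (tsupport ⇑((f k : X →ᵇ ℝ))) (tsupport ⇑((g k : X →ᵇ ℝ))) :=
      fun k => hd.mono ((hsf k).trans hU₁A) ((hsg k).trans hU₂A)
    have hwnorm : ∀ k, ‖(f k) • v₁ + (g k) • v₂‖ ≤ 1 := by
      intro k
      have htot := hnorm {0, 1} (fun i => if i = 0 then f k else g k)
        (fun i => if i = 0 then v₁ else v₂) 1 1 zero_le_one zero_le_one ?_ ?_ ?_
      · have hsum : (∑ i ∈ ({0, 1} : Finset ℕ),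
            (if i = 0 then f k else g k) • (if i = 0 then v₁ else v₂))
            = (f k) • v₁ + (g k) • v₂ := by
          rw [Finset.sum_pair (by norm_num : (0:ℕ) ≠ 1)]
          norm_num
        rw [hsum] at htot
        simpa using htot
      · intro i hi j hj hij
        simp only [Finset.coe_insert, Finset.coe_singleton, Set.mem_insert_iff,
          Set.mem_singleton_iff] at hi hj
        rcases hi with rfl | rfl <;> rcases hj with rfl | rfl
        · exact absurd rfl hij
        · simpa using hdisj k
        · simpa using (hdisj k).symm
        · exact absurd rfl hij
      · intro i hi
        rcases Finset.mem_insert.1 hi with rfl | hi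
        · simpa using norm_coe_le_one (hf0 k) (hf1 k)
        · rcases Finset.mem_singleton.1 hi with rfl
          simpa using norm_coe_le_one (hg0 k) (hg1 k)
      · intro i hi
        rcases Finset.mem_insert.1 hi with rfl | hi
        · simpa using hv₁
        · rcases Finset.mem_singleton.1 hi with rfl
          simpa using hv₂
    have hsupp : ∀ k, suppIn R ((f k) • v₁ + (g k) • v₂) (A₁ ∪ A₂) := by
      intro k
      refine ⟨closure U₁ ∪ closure U₂, isClosed_closure.union isClosed_closure,
        union_subset_union hU₁A hU₂A, locNorm_eq_zero_of fun h hh _ => ?_⟩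
      have hhf : h * f k = 0 := by
        apply subring_mul_eq_zero
        intro x
        by_cases hx : ((h : X →ᵇ ℝ)) x = 0
        · exact Or.inl hx
        · refine Or.inr ?_
          have hx' := hh (subset_closure hx)
          apply hfv k x
          intro hxU
          exact hx' (Or.inl (subset_closure hxU))
      have hhg : h * g k = 0 := by
        apply subring_mul_eq_zero
        intro x
        by_cases hx : ((h : X →ᵇ ℝ)) x = 0
        · exact Or.inl hx
        · refine Or.inr ?_
          have hx' := hh (subset_closure hx)
          apply hgv k x
          intro hxU
          exact hx' (Or.inr (subset_closure hxU))
      rw [smul_add, ← mul_smul, ← mul_smul, hhf, hhg, zero_smul, zero_smul, add_zero, norm_zero]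
    have hmem : ∀ k, F ((f k) • v₁ + (g k) • v₂) ≤ sigF R F (A₁ ∪ A₂) := fun k =>
      le_sigF_of_mem ⟨_, hwnorm k, hsupp k, rfl⟩
    have hlim : Tendsto (fun k => F ((f k) • v₁ + (g k) • v₂)) atTop (𝓝 (F v₁ + F v₂)) := by
      have := hFf.add hFg
      apply this.congr
      intro k
      rw [map_add]
    exact le_of_tendsto hlim (Filter.Eventually.of_forall hmem)
  have hne₁ : (sigSet R F A₁).Nonempty := ⟨0, zero_mem_sigSet F A₁⟩
  have hne₂ : (sigSet R F A₂).Nonempty := ⟨0, zero_mem_sigSet F A₂⟩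
  have h1' : sigF R F A₁ ≤ sigF R F (A₁ ∪ A₂) - sigF R F A₂ := by
    apply csSup_le hne₁
    intro r₁ hr₁
    have h2' : sigF R F A₂ ≤ sigF R F (A₁ ∪ A₂) - r₁ := by
      apply csSup_le hne₂
      intro r₂ hr₂
      linarith [key r₁ hr₁ r₂ hr₂]
    linarith
  linarith

theorem sigF_subadd (hR : ApproximatesOpenSets R) (hnorm : NormSMulCompat R V) {F : V →L[ℝ] ℝ}
    (htight : IsTight R F) {A B : Set X} (hA : IsOpen A) (hB : IsOpen B) :
    sigF R F (A ∪ B) ≤ sigF R F A + sigF R F B := by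
  apply csSup_le ⟨0, zero_mem_sigSet F _⟩
  rintro r ⟨v, hv, ⟨C, hC, hCAB, hl⟩, rfl⟩
  have hD : IsClosed (C \ B) := hC.inter hB.isClosed_compl
  have hDA : C \ B ⊆ A := fun x hx => (hCAB hx.1).resolve_right hx.2
  obtain ⟨U₁, hU₁o, hDU₁, hU₁A⟩ := normal_exists_closure_subset hD hA hDA
  have hE : IsClosed (C \ U₁) := hC.inter hU₁o.isClosed_compl
  have hEB : C \ U₁ ⊆ B := by
    rintro x ⟨hxC, hxU⟩
    by_cases hxB : x ∈ B
    · exact hxB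
    · exact absurd (hDU₁ ⟨hxC, hxB⟩) hxU
  obtain ⟨U₂, hU₂o, hEU₂, hU₂B⟩ := normal_exists_closure_subset hE hB hEB
  have hCU : C ⊆ U₁ ∪ U₂ := by
    intro x hx
    by_cases hxU : x ∈ U₁
    · exact Or.inl hxU
    · exact Or.inr (hEU₂ ⟨hx, hxU⟩)
  obtain ⟨a, ha0, ha1, ham, hat, hav⟩ := approxSeq hR hU₁o
  obtain ⟨b, hb0, hb1, hbm, hbt, hbv⟩ := approxSeq hR hU₂o
  set q : ℕ → ↥R := fun k => ⟨((b k : X →ᵇ ℝ)) ⊓ ((1 : X →ᵇ ℝ) - ((a k : X →ᵇ ℝ))),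
    inf_mem' hR (b k).2 (sub_mem R.one_mem (a k).2)⟩ with hqdef
  have hqval : ∀ k x, ((q k : X →ᵇ ℝ)) x = min (((b k : X →ᵇ ℝ)) x) (1 - ((a k : X →ᵇ ℝ)) x) :=
    fun k x => rfl
  set s : ℕ → ↥R := fun k => a k + q k with hsdef
  have hsval : ∀ k x, ((s k : X →ᵇ ℝ)) x
      = min (((a k : X →ᵇ ℝ)) x + ((b k : X →ᵇ ℝ)) x) 1 := by
    intro k x
    show ((a k : X →ᵇ ℝ)) x + ((q k : X →ᵇ ℝ)) x = _
    rw [hqval]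
    rcases le_total (((b k : X →ᵇ ℝ)) x) (1 - ((a k : X →ᵇ ℝ)) x) with h | h
    · rw [min_eq_left h, min_eq_left (by linarith)]
    · rw [min_eq_right h, min_eq_right (by linarith)]
      ring
  have hs0 : ∀ k x, 0 ≤ ((s k : X →ᵇ ℝ)) x := fun k x => by
    rw [hsval]; exact le_min (add_nonneg (ha0 k x) (hb0 k x)) zero_le_one
  have hs1 : ∀ k x, ((s k : X →ᵇ ℝ)) x ≤ 1 := fun k x => by
    rw [hsval]; exact min_le_right _ _
  have hsm : ∀ x, Monotone fun k => ((s k : X →ᵇ ℝ)) x := by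
    intro x k l hkl
    simp only []
    rw [hsval k x, hsval l x]
    exact min_le_min (add_le_add (ham x hkl) (hbm x hkl)) le_rfl
  have hst : ∀ x ∈ U₁ ∪ U₂, Tendsto (fun k => ((s k : X →ᵇ ℝ)) x) atTop (𝓝 1) := by
    classical
    intro x hx
    have hta : Tendsto (fun k => ((a k : X →ᵇ ℝ)) x) atTop (𝓝 (if x ∈ U₁ then 1 else 0)) := by
      by_cases h : x ∈ U₁
      · simpa [h] using hat x h
      · rw [if_neg h]
        exact tendsto_const_nhds.congr fun k => (hav k x h).symm
    have htb : Tendsto (fun k => ((b k : X →ᵇ ℝ)) x) atTop (𝓝 (if x ∈ U₂ then 1 else 0)) := by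
      by_cases h : x ∈ U₂
      · simpa [h] using hbt x h
      · rw [if_neg h]
        exact tendsto_const_nhds.congr fun k => (hbv k x h).symm
    have hmin := (hta.add htb).min
      (tendsto_const_nhds : Tendsto (fun _ : ℕ => (1:ℝ)) atTop (𝓝 1))
    have hval : min ((if x ∈ U₁ then (1:ℝ) else 0) + (if x ∈ U₂ then (1:ℝ) else 0)) 1 = 1 := by
      by_cases h1 : x ∈ U₁ <;> by_cases h2 : x ∈ U₂ <;> simp_all <;> norm_num
    rw [hval] at hmin
    exact hmin.congr fun k => (hsval k x).symm
  have hFs := core hR hnorm htight hC hl (hU₁o.union hU₂o) hCU s hs0 hs1 hsm hst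
  have hsplit : ∀ k, F ((s k) • v) = F ((a k) • v) + F ((q k) • v) := fun k => by
    show F ((a k + q k) • v) = _
    rw [add_smul, map_add]
  have hterm1 : ∀ k, F ((a k) • v) ≤ sigF R F A := by
    intro k
    apply le_sigF_of_mem
    refine ⟨(a k) • v, ?_, suppIn_smul _ _ ((tsupport_approx_subset (hav k)).trans hU₁A), rfl⟩
    calc ‖(a k) • v‖ ≤ ‖((a k : X →ᵇ ℝ))‖ * ‖v‖ := myNormSmulLe hnorm _ _
    _ ≤ 1 * 1 := mul_le_mul (norm_coe_le_one (ha0 k) (ha1 k)) hv (norm_nonneg v) zero_le_one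
    _ = 1 := one_mul 1
  have hqv : ∀ k x, x ∉ U₂ → ((q k : X →ᵇ ℝ)) x = 0 := by
    intro k x hx
    rw [hqval, hbv k x hx, min_eq_left (by linarith [ha1 k x])]
  have hq0 : ∀ k x, 0 ≤ ((q k : X →ᵇ ℝ)) x := fun k x => by
    rw [hqval]; exact le_min (hb0 k x) (by linarith [ha1 k x])
  have hq1 : ∀ k x, ((q k : X →ᵇ ℝ)) x ≤ 1 := fun k x => by
    rw [hqval]; exact (min_le_left _ _).trans (hb1 k x)
  have hterm2 : ∀ k, F ((q k) • v) ≤ sigF R F B := by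
    intro k
    apply le_sigF_of_mem
    refine ⟨(q k) • v, ?_, suppIn_smul _ _ ((tsupport_approx_subset (hqv k)).trans hU₂B), rfl⟩
    calc ‖(q k) • v‖ ≤ ‖((q k : X →ᵇ ℝ))‖ * ‖v‖ := myNormSmulLe hnorm _ _
    _ ≤ 1 * 1 := mul_le_mul (norm_coe_le_one (hq0 k) (hq1 k)) hv (norm_nonneg v) zero_le_one
    _ = 1 := one_mul 1
  exact le_of_tendsto hFs (Filter.Eventually.of_forall fun k => by
    rw [hsplit k]; linarith [hterm1 k, hterm2 k])

theorem sigF_biUnion_le (hR : ApproximatesOpenSets R) (hnorm : NormSMulCompat R V)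
    {F : V →L[ℝ] ℝ} (htight : IsTight R F) (T : ℕ → Set X) (hT : ∀ n, IsOpen (T n)) (m : ℕ) :
    sigF R F (⋃ n ∈ Finset.range m, T n) ≤ ∑ n ∈ Finset.range m, sigF R F (T n) := by
  induction m with
  | zero => simp [sigF_empty hnorm]
  | succ m ih =>
      have hun : (⋃ n ∈ Finset.range (m+1), T n) = (⋃ n ∈ Finset.range m, T n) ∪ T m := by
        rw [Finset.range_add_one, Finset.set_biUnion_insert, union_comm]
      rw [hun, Finset.sum_range_succ]
      have h1 := sigF_subadd hR hnorm htight (A := ⋃ n ∈ Finset.range m, T n) (B := T m)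
        (isOpen_biUnion fun n _ => hT n) (hT m)
      linarith

end Aux3

section Aux4

variable {X : Type*} [MetricSpace X] {V : Type*} [NormedAddCommGroup V]
  [NormedSpace ℝ V] {R : Subring (X →ᵇ ℝ)} [Module R V]

theorem sigF_countsub (hR : ApproximatesOpenSets R) (hnorm : NormSMulCompat R V)
    {F : V →L[ℝ] ℝ} (htight : IsTight R F) {A : Set X} (hA : IsOpen A)
    (T : ℕ → Set X) (hT : ∀ n, IsOpen (T n)) (hcov : A ⊆ ⋃ n, T n) :
    ENNReal.ofReal (sigF R F A) ≤ ∑' n, ENNReal.ofReal (sigF R F (T n)) := by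
  by_cases htop : (∑' n, ENNReal.ofReal (sigF R F (T n))) = ⊤
  · rw [htop]; exact le_top
  set Tr := (∑' n, ENNReal.ofReal (sigF R F (T n))).toReal with hTrdef
  have hpart : ∀ m, (∑ n ∈ Finset.range m, sigF R F (T n)) ≤ Tr := by
    intro m
    have h1 : (∑ n ∈ Finset.range m, ENNReal.ofReal (sigF R F (T n)))
        ≤ ∑' n, ENNReal.ofReal (sigF R F (T n)) := ENNReal.sum_le_tsum _
    have h2 := ENNReal.toReal_mono htop h1
    calc ∑ n ∈ Finset.range m, sigF R F (T n)
        = (∑ n ∈ Finset.range m, ENNReal.ofReal (sigF R F (T n))).toReal := by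
          rw [ENNReal.toReal_sum (fun a _ => ENNReal.ofReal_ne_top)]
          exact Finset.sum_congr rfl fun n _ => (ENNReal.toReal_ofReal (sigF_nonneg F _)).symm
      _ ≤ Tr := h2
  suffices hre : sigF R F A ≤ Tr by
    calc ENNReal.ofReal (sigF R F A) ≤ ENNReal.ofReal Tr := ENNReal.ofReal_le_ofReal hre
    _ = _ := ENNReal.ofReal_toReal htop
  apply csSup_le ⟨0, zero_mem_sigSet F A⟩
  rintro r ⟨v, hv, ⟨C, hC, hCA, hl⟩, rfl⟩
  set B : ℕ → Set X := fun m => A ∩ ⋃ n ∈ Finset.range (m+1), T n with hBdef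
  have hBo : ∀ m, IsOpen (B m) := fun m => hA.inter (isOpen_biUnion fun n _ => hT n)
  have hBmono : ∀ {m m'}, m ≤ m' → B m ⊆ B m' := by
    intro m m' h
    apply inter_subset_inter_right
    apply Set.iUnion₂_subset
    intro n hn
    exact Set.subset_biUnion_of_mem
      (Finset.mem_range.2 (by have := Finset.mem_range.1 hn; omega))
  have hBU : A ⊆ ⋃ m, B m := by
    intro x hx
    obtain ⟨n, hn⟩ := mem_iUnion.1 (hcov hx)
    exact mem_iUnion.2 ⟨n, hx, mem_biUnion (Finset.self_mem_range_succ n) hn⟩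
  set U : ℕ → Set X := fun m => {x | ((m:ℝ≥0∞)+1)⁻¹ < EMetric.infEdist x (B m)ᶜ} with hUdef
  have hUo : ∀ m, IsOpen (U m) :=
    fun m => isOpen_lt continuous_const EMetric.continuous_infEdist
  have hUB : ∀ m, closure (U m) ⊆ B m := by
    intro m
    have h1 : closure (U m) ⊆ {x | ((m:ℝ≥0∞)+1)⁻¹ ≤ EMetric.infEdist x (B m)ᶜ} := by
      apply closure_minimal ?_ (isClosed_le continuous_const EMetric.continuous_infEdist)
      intro x hx
      show ((m:ℝ≥0∞)+1)⁻¹ ≤ EMetric.infEdist x (B m)ᶜ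
      exact le_of_lt hx
    intro x hx
    by_contra hxB
    have h0 : EMetric.infEdist x (B m)ᶜ = 0 := EMetric.infEdist_zero_of_mem hxB
    have h2 := h1 hx
    simp only [mem_setOf_eq] at h2
    rw [h0, nonpos_iff_eq_zero] at h2
    exact (ENNReal.inv_ne_zero.2
      (ENNReal.add_ne_top.2 ⟨ENNReal.natCast_ne_top m, ENNReal.one_ne_top⟩)) h2
  have hUcov : ∀ x ∈ A, ∃ m, x ∈ U m := by
    intro x hx
    obtain ⟨n, hn⟩ := mem_iUnion.1 (hBU hx)
    have hpos : EMetric.infEdist x (B n)ᶜ ≠ 0 := by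
      intro h0
      have hcl : x ∈ closure (B n)ᶜ := EMetric.mem_closure_iff_infEdist_zero.2 h0
      rw [(hBo n).isClosed_compl.closure_eq] at hcl
      exact hcl hn
    obtain ⟨i, hi⟩ := ENNReal.exists_inv_nat_lt hpos
    refine ⟨max n i, ?_⟩
    show (((max n i : ℕ):ℝ≥0∞) + 1)⁻¹ < EMetric.infEdist x (B (max n i))ᶜ
    have hle : EMetric.infEdist x (B n)ᶜ ≤ EMetric.infEdist x (B (max n i))ᶜ :=
      EMetric.infEdist_anti (compl_subset_compl.2 (hBmono (le_max_left n i)))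
    refine lt_of_lt_of_le (lt_of_le_of_lt ?_ hi) hle
    apply ENNReal.inv_le_inv.2
    calc ((i:ℕ):ℝ≥0∞) ≤ ((max n i : ℕ):ℝ≥0∞) := by exact_mod_cast le_max_right n i
    _ ≤ ((max n i : ℕ):ℝ≥0∞) + 1 := le_self_add
  choose a ha using fun m => approxSeq hR (hUo m)
  have ha0 : ∀ m k x, 0 ≤ ((a m k : X →ᵇ ℝ)) x := fun m => (ha m).1
  have ha1 : ∀ m k x, ((a m k : X →ᵇ ℝ)) x ≤ 1 := fun m => (ha m).2.1
  have ham : ∀ m x, Monotone fun k => ((a m k : X →ᵇ ℝ)) x := fun m => (ha m).2.2.1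
  have hat : ∀ m, ∀ x ∈ U m, Tendsto (fun k => ((a m k : X →ᵇ ℝ)) x) atTop (𝓝 1) :=
    fun m => (ha m).2.2.2.1
  have hav : ∀ m k x, x ∉ U m → ((a m k : X →ᵇ ℝ)) x = 0 := fun m => (ha m).2.2.2.2
  have hne : ∀ k : ℕ, (Finset.range (k+1)).Nonempty :=
    fun k => Finset.nonempty_range_iff.2 (by omega)
  set bb : ℕ → (X →ᵇ ℝ) :=
    fun k => (Finset.range (k+1)).sup' (hne k) (fun m => ((a m k : X →ᵇ ℝ))) with hbbdef
  have hbbmem : ∀ k, bb k ∈ R := by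
    intro k
    apply Finset.sup'_induction
    · intro f hf g hg; exact sup_mem' hR hf hg
    · intro m _; exact (a m k).2
  have hbbval : ∀ k x, bb k x
      = (Finset.range (k+1)).sup' (hne k) (fun m => ((a m k : X →ᵇ ℝ)) x) := by
    intro k x
    exact Finset.comp_sup'_eq_sup'_comp (hne k) (fun h : X →ᵇ ℝ => h x) (fun f g => rfl)
  set s : ℕ → ↥R := fun k => ⟨bb k, hbbmem k⟩ with hsdef
  have hsval : ∀ k x, ((s k : X →ᵇ ℝ)) x
      = (Finset.range (k+1)).sup' (hne k) (fun m => ((a m k : X →ᵇ ℝ)) x) := hbbval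
  have hs0 : ∀ k x, 0 ≤ ((s k : X →ᵇ ℝ)) x := fun k x => by
    rw [hsval]
    exact le_trans (ha0 0 k x) (Finset.le_sup' (fun m => ((a m k : X →ᵇ ℝ)) x)
      (show (0:ℕ) ∈ Finset.range (k+1) from Finset.mem_range.2 (Nat.succ_pos k)))
  have hs1 : ∀ k x, ((s k : X →ᵇ ℝ)) x ≤ 1 := fun k x => by
    rw [hsval]; exact Finset.sup'_le _ _ fun m _ => ha1 m k x
  have hsm : ∀ x, Monotone fun k => ((s k : X →ᵇ ℝ)) x := by
    intro x
    apply monotone_nat_of_le_succ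
    intro k
    rw [hsval k x, hsval (k+1) x]
    apply Finset.sup'_le
    intro m hm
    calc ((a m k : X →ᵇ ℝ)) x ≤ ((a m (k+1) : X →ᵇ ℝ)) x := ham m x (Nat.le_succ k)
    _ ≤ _ := Finset.le_sup' (fun m => ((a m (k+1) : X →ᵇ ℝ)) x)
      (show m ∈ Finset.range (k+1+1) from
        Finset.mem_range.2 (by have := Finset.mem_range.1 hm; omega))
  have hst : ∀ x ∈ A, Tendsto (fun k => ((s k : X →ᵇ ℝ)) x) atTop (𝓝 1) := by
    intro x hx
    obtain ⟨m₀, hm₀⟩ := hUcov x hx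
    have hlowev : ∀ᶠ k in atTop, ((a m₀ k : X →ᵇ ℝ)) x ≤ ((s k : X →ᵇ ℝ)) x := by
      filter_upwards [eventually_ge_atTop m₀] with k hk
      rw [hsval]
      exact Finset.le_sup' (fun m => ((a m k : X →ᵇ ℝ)) x)
        (show m₀ ∈ Finset.range (k+1) from Finset.mem_range.2 (by omega))
    exact tendsto_of_tendsto_of_tendsto_of_le_of_le' (hat m₀ x hm₀) tendsto_const_nhds
      hlowev (Eventually.of_forall (hs1 · x))
  have hFs := core hR hnorm htight hC hl hA hCA s hs0 hs1 hsm hst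
  have hssup : ∀ k, tsupport ⇑((s k : X →ᵇ ℝ)) ⊆ B k := by
    intro k
    have hclosed : IsClosed (⋃ m ∈ Finset.range (k+1), closure (U m)) :=
      (Finset.range (k+1)).finite_toSet.isClosed_biUnion fun m _ => isClosed_closure
    have hsupp : Function.support ⇑((s k : X →ᵇ ℝ))
        ⊆ ⋃ m ∈ Finset.range (k+1), closure (U m) := by
      intro x hx
      rw [Function.mem_support] at hx
      by_contra hxn
      apply hx
      have hall : ∀ m ∈ Finset.range (k+1), ((a m k : X →ᵇ ℝ)) x = 0 := by
        intro m hm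
        apply hav m k x
        intro hxU
        exact hxn (mem_biUnion hm (subset_closure hxU))
      rw [hsval]
      apply le_antisymm
      · exact Finset.sup'_le _ _ fun m hm => le_of_eq (hall m hm)
      · rw [← hall 0 (Finset.mem_range.2 (Nat.succ_pos k))]
        exact Finset.le_sup' (fun m => ((a m k : X →ᵇ ℝ)) x)
          (show (0:ℕ) ∈ Finset.range (k+1) from Finset.mem_range.2 (Nat.succ_pos k))
    have h2 : tsupport ⇑((s k : X →ᵇ ℝ)) ⊆ ⋃ m ∈ Finset.range (k+1), closure (U m) :=
      closure_minimal hsupp hclosed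
    refine h2.trans ?_
    apply Set.iUnion₂_subset
    intro m hm
    exact (hUB m).trans (hBmono (by have := Finset.mem_range.1 hm; omega))
  have hbound : ∀ k, F ((s k) • v) ≤ Tr := by
    intro k
    have h1 : F ((s k) • v) ≤ sigF R F (B k) := by
      apply le_sigF_of_mem
      refine ⟨(s k) • v, ?_, suppIn_smul _ _ (hssup k), rfl⟩
      calc ‖(s k) • v‖ ≤ ‖((s k : X →ᵇ ℝ))‖ * ‖v‖ := myNormSmulLe hnorm _ _
      _ ≤ 1 * 1 := mul_le_mul (norm_coe_le_one (hs0 k) (hs1 k)) hv (norm_nonneg v) zero_le_one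
      _ = 1 := one_mul 1
    have h2 : sigF R F (B k) ≤ ∑ n ∈ Finset.range (k+1), sigF R F (T n) :=
      le_trans (sigF_mono F inter_subset_right) (sigF_biUnion_le hR hnorm htight T hT (k+1))
    exact le_trans h1 (le_trans h2 (hpart (k+1)))
  exact le_of_tendsto hFs (Filter.Eventually.of_forall hbound)

end Aux4

section Aux5

variable {X : Type*} [MetricSpace X] [MeasurableSpace X] [BorelSpace X]
  {V : Type*} [NormedAddCommGroup V] [NormedSpace ℝ V] {R : Subring (X →ᵇ ℝ)} [Module R V]

theorem exists_measure (hR : ApproximatesOpenSets R) (hnorm : NormSMulCompat R V)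
    {F : V →L[ℝ] ℝ} (htight : IsTight R F) :
    ∃ μ : Measure X, IsFiniteMeasure μ ∧
      ∀ A : Set X, IsOpen A → μ A = ENNReal.ofReal (sigF R F A) := by
  classical
  set mf : Set X → ℝ≥0∞ := fun A => if IsOpen A then ENNReal.ofReal (sigF R F A) else ⊤ with hmf
  have hmf0 : mf ∅ = 0 := by
    rw [hmf]
    simp only [if_pos isOpen_empty]
    rw [sigF_empty hnorm, ENNReal.ofReal_zero]
  set μ₀ := OuterMeasure.ofFunction mf hmf0 with hμ₀
  have hle : ∀ s, μ₀ s ≤ mf s := fun s => OuterMeasure.ofFunction_le s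
  have hcovle : ∀ (E : Set X) (t : ℕ → Set X), E ⊆ ⋃ n, t n → μ₀ E ≤ ∑' n, mf (t n) := by
    intro E t hcov
    calc μ₀ E ≤ μ₀ (⋃ n, t n) := measure_mono hcov
    _ ≤ ∑' n, μ₀ (t n) := measure_iUnion_le t
    _ ≤ ∑' n, mf (t n) := ENNReal.tsum_le_tsum fun n => hle (t n)
  have hopen : ∀ A : Set X, IsOpen A → μ₀ A = ENNReal.ofReal (sigF R F A) := by
    intro A hA
    apply le_antisymm
    · calc μ₀ A ≤ mf A := hle A
      _ = _ := by rw [hmf]; simp only [if_pos hA]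
    · rw [hμ₀, OuterMeasure.ofFunction_apply]
      apply le_iInf
      intro t
      apply le_iInf
      intro hcov
      by_cases hall : ∀ n, IsOpen (t n)
      · calc ENNReal.ofReal (sigF R F A)
            ≤ ∑' n, ENNReal.ofReal (sigF R F (t n)) :=
              sigF_countsub hR hnorm htight hA t hall hcov
        _ = ∑' n, mf (t n) := tsum_congr fun n => by rw [hmf]; simp only [if_pos (hall n)]
      · push_neg at hall
        obtain ⟨n₀, hn₀⟩ := hall
        refine le_trans le_top (le_trans ?_ (ENNReal.le_tsum n₀))
        rw [hmf]
        simp only [if_neg hn₀]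
        exact le_rfl
  have hmetric : μ₀.IsMetric := by
    intro E₁ E₂ hsep
    apply le_antisymm (measure_union_le E₁ E₂)
    obtain ⟨r, hr0, hr⟩ := hsep
    set U₁ : Set X := {x | EMetric.infEdist x E₁ < r/2} with hU₁
    set U₂ : Set X := {x | EMetric.infEdist x E₂ < r/2} with hU₂
    have hU₁o : IsOpen U₁ := isOpen_lt EMetric.continuous_infEdist continuous_const
    have hU₂o : IsOpen U₂ := isOpen_lt EMetric.continuous_infEdist continuous_const
    have hE₁U : E₁ ⊆ U₁ := fun x hx => by
      show Metric.infEDist x E₁ < r/2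
      rw [EMetric.infEdist_zero_of_mem hx]
      exact ENNReal.half_pos hr0
    have hE₂U : E₂ ⊆ U₂ := fun x hx => by
      show Metric.infEDist x E₂ < r/2
      rw [EMetric.infEdist_zero_of_mem hx]
      exact ENNReal.half_pos hr0
    have hdisj : Disjoint U₁ U₂ := by
      rw [Set.disjoint_left]
      intro x hx1 hx2
      obtain ⟨y, hy, hxy⟩ := EMetric.infEdist_lt_iff.1 hx1
      obtain ⟨z, hz, hxz⟩ := EMetric.infEdist_lt_iff.1 hx2
      have hlt : edist y z < r := by
        calc edist y z ≤ edist y x + edist x z := edist_triangle _ _ _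
        _ = edist x y + edist x z := by rw [edist_comm]
        _ < r/2 + r/2 := ENNReal.add_lt_add hxy hxz
        _ = r := ENNReal.add_halves r
      exact absurd hlt (not_lt.2 (hr y hy z hz))
    conv_rhs => rw [hμ₀, OuterMeasure.ofFunction_apply]
    apply le_iInf
    intro t
    apply le_iInf
    intro hcov
    have h₁ : μ₀ E₁ ≤ ∑' n, mf (t n ∩ U₁) := by
      apply hcovle
      intro x hx
      obtain ⟨n, hn⟩ := mem_iUnion.1 (hcov (Or.inl hx))
      exact mem_iUnion.2 ⟨n, hn, hE₁U hx⟩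
    have h₂ : μ₀ E₂ ≤ ∑' n, mf (t n ∩ U₂) := by
      apply hcovle
      intro x hx
      obtain ⟨n, hn⟩ := mem_iUnion.1 (hcov (Or.inr hx))
      exact mem_iUnion.2 ⟨n, hn, hE₂U hx⟩
    calc μ₀ E₁ + μ₀ E₂ ≤ (∑' n, mf (t n ∩ U₁)) + (∑' n, mf (t n ∩ U₂)) := add_le_add h₁ h₂
    _ = ∑' n, (mf (t n ∩ U₁) + mf (t n ∩ U₂)) := ENNReal.tsum_add.symm
    _ ≤ ∑' n, mf (t n) := by
        apply ENNReal.tsum_le_tsum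
        intro n
        by_cases hn : IsOpen (t n)
        · have e1 : mf (t n ∩ U₁) = ENNReal.ofReal (sigF R F (t n ∩ U₁)) := by
            rw [hmf]; simp only [if_pos (hn.inter hU₁o)]
          have e2 : mf (t n ∩ U₂) = ENNReal.ofReal (sigF R F (t n ∩ U₂)) := by
            rw [hmf]; simp only [if_pos (hn.inter hU₂o)]
          have e3 : mf (t n) = ENNReal.ofReal (sigF R F (t n)) := by
            rw [hmf]; simp only [if_pos hn]
          rw [e1, e2, e3, ← ENNReal.ofReal_add (sigF_nonneg F _) (sigF_nonneg F _)]
          apply ENNReal.ofReal_le_ofReal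
          calc sigF R F (t n ∩ U₁) + sigF R F (t n ∩ U₂)
              ≤ sigF R F ((t n ∩ U₁) ∪ (t n ∩ U₂)) :=
                sigF_superadd hR hnorm htight (hn.inter hU₁o) (hn.inter hU₂o)
                  (hdisj.mono inter_subset_right inter_subset_right)
          _ ≤ sigF R F (t n) := sigF_mono F (union_subset inter_subset_left inter_subset_left)
        · rw [hmf]
          simp only [if_neg hn]
          exact le_top
  have hcar : ‹MeasurableSpace X› ≤ μ₀.caratheodory := by
    rw [BorelSpace.measurable_eq (α := X)]
    exact hmetric.borel_le_caratheodory
  refine ⟨μ₀.toMeasure hcar, ⟨?_⟩, ?_⟩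
  · rw [MeasureTheory.toMeasure_apply μ₀ hcar MeasurableSet.univ]
    calc μ₀ Set.univ ≤ mf Set.univ := hle _
    _ = ENNReal.ofReal (sigF R F Set.univ) := by rw [hmf]; simp only [if_pos isOpen_univ]
    _ < ⊤ := ENNReal.ofReal_lt_top
  · intro A hA
    rw [MeasureTheory.toMeasure_apply μ₀ hcar hA.measurableSet, hopen A hA]

end Aux5

section Aux6

variable {X : Type*} [MetricSpace X] [MeasurableSpace X] [BorelSpace X]
  {V : Type*} [NormedAddCommGroup V] [NormedSpace ℝ V] {R : Subring (X →ᵇ ℝ)} [Module R V]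

theorem tight_of_measure (hR : ApproximatesOpenSets R) (hconst : ConstSMulCompat R V)
    (hnorm : NormSMulCompat R V) {F : V →L[ℝ] ℝ} (μ : Measure X)
    (hfin : IsFiniteMeasure μ)
    (hμ : ∀ A : Set X, IsOpen A → μ A = ENNReal.ofReal (sigF R F A)) : IsTight R F := by
  intro v f hant htend
  rw [NormedAddCommGroup.tendsto_nhds_zero]
  intro δ hδ
  have hf0 : ∀ n x, 0 ≤ ((f n : X →ᵇ ℝ)) x := fun n x => (hant x).le_of_tendsto (htend x) n
  have hfb : ∀ n x, ((f n : X →ᵇ ℝ)) x ≤ ‖((f 0 : X →ᵇ ℝ))‖ := fun n x =>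
    le_trans (hant x (Nat.zero_le n))
      (le_trans (le_abs_self _) ((f 0 : X →ᵇ ℝ).norm_coe_le_norm x))
  set c₁ : ℝ := ‖F‖ * ‖v‖ + 1 with hc₁
  have hc₁p : 0 < c₁ := by positivity
  set ε : ℝ := δ / (2 * c₁) with hε
  have hεp : 0 < ε := by positivity
  set c₂ : ℝ := ‖((f 0 : X →ᵇ ℝ))‖ * ‖v‖ + 1 with hc₂
  have hc₂p : 0 < c₂ := by positivity
  set δ' : ℝ := δ / (2 * c₂) with hδ'
  have hδ'p : 0 < δ' := by positivity
  set O : ℕ → Set X := fun n => {x | ε/2 < ((f n : X →ᵇ ℝ)) x} with hO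
  have hOo : ∀ n, IsOpen (O n) := fun n => isOpen_lt continuous_const (f n : X →ᵇ ℝ).continuous
  have hOanti : Antitone O := fun n m hnm x hx =>
    lt_of_lt_of_le hx (hant x hnm)
  have hOint : (⋂ n, O n) = ∅ := by
    rw [Set.eq_empty_iff_forall_notMem]
    intro x hx
    have h1 : ∀ n, ε/2 < ((f n : X →ᵇ ℝ)) x := fun n => mem_iInter.1 hx n
    have h2 : ε/2 ≤ 0 := ge_of_tendsto (htend x) (Filter.Eventually.of_forall fun n => (h1 n).le)
    linarith
  have hμO : Tendsto (fun n => μ (O n)) atTop (𝓝 0) := by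
    have h := MeasureTheory.tendsto_measure_iInter_atTop (μ := μ) (s := O)
      (fun n => (hOo n).measurableSet.nullMeasurableSet) hOanti ⟨0, measure_ne_top μ _⟩
    rw [hOint] at h
    simpa [Function.comp_def] using h
  have hσO : Tendsto (fun n => sigF R F (O n)) atTop (𝓝 0) := by
    have heq : ∀ n, sigF R F (O n) = (μ (O n)).toReal := fun n => by
      rw [hμ _ (hOo n), ENNReal.toReal_ofReal (sigF_nonneg F _)]
    have h2 : Tendsto (fun n => (μ (O n)).toReal) atTop (𝓝 ((0:ℝ≥0∞).toReal)) :=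
      (ENNReal.tendsto_toReal (by simp)).comp hμO
    simp only [ENNReal.toReal_zero] at h2
    exact h2.congr fun n => (heq n).symm
  filter_upwards [hσO.eventually_lt_const hδ'p] with n hn
  set g : ↥R := ⟨((f n : X →ᵇ ℝ)) ⊓ BoundedContinuousFunction.const X ε,
    inf_mem' hR (f n).2 (hR.const_mem ε)⟩ with hgdef
  set h : ↥R := f n - g with hhdef
  have hgval : ∀ x, ((g : X →ᵇ ℝ)) x = min (((f n : X →ᵇ ℝ)) x) ε := fun x => rfl
  have hhval : ∀ x, ((h : X →ᵇ ℝ)) x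
      = ((f n : X →ᵇ ℝ)) x - min (((f n : X →ᵇ ℝ)) x) ε := by
    intro x
    have h1 : ((h : X →ᵇ ℝ)) = ((f n : X →ᵇ ℝ)) - ((g : X →ᵇ ℝ)) := rfl
    rw [h1, BoundedContinuousFunction.sub_apply, hgval]
  have hsplit : F ((f n) • v) = F (g • v) + F (h • v) := by
    have he : (f n : ↥R) = g + h := by rw [hhdef]; ring
    rw [he, add_smul, map_add]
  have hb1 : |F (g • v)| ≤ ‖F‖ * (ε * ‖v‖) := by
    have h0 : |F (g • v)| ≤ ‖F‖ * ‖g • v‖ := F.le_opNorm _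
    refine le_trans h0 (mul_le_mul_of_nonneg_left ?_ (norm_nonneg F))
    have hgn : ‖(g : X →ᵇ ℝ)‖ ≤ ε := by
      apply (BoundedContinuousFunction.norm_le hεp.le).2
      intro x
      rw [hgval, Real.norm_eq_abs, abs_le]
      refine ⟨?_, min_le_right _ _⟩
      have := le_min (hf0 n x) hεp.le
      linarith
    calc ‖g • v‖ ≤ ‖(g : X →ᵇ ℝ)‖ * ‖v‖ := myNormSmulLe hnorm _ _
    _ ≤ ε * ‖v‖ := mul_le_mul_of_nonneg_right hgn (norm_nonneg v)
  have hhsupp : tsupport ⇑((h : X →ᵇ ℝ)) ⊆ O n := by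
    have h1 : Function.support ⇑((h : X →ᵇ ℝ)) ⊆ {x | ε ≤ ((f n : X →ᵇ ℝ)) x} := by
      intro x hx
      rw [Function.mem_support, hhval] at hx
      by_contra hxe
      simp only [Set.mem_setOf_eq, not_le] at hxe
      exact hx (by rw [min_eq_left hxe.le]; ring)
    have h2 : tsupport ⇑((h : X →ᵇ ℝ)) ⊆ {x | ε ≤ ((f n : X →ᵇ ℝ)) x} :=
      closure_minimal h1 (isClosed_le continuous_const (f n : X →ᵇ ℝ).continuous)
    refine h2.trans ?_
    intro x hx
    show ε/2 < ((f n : X →ᵇ ℝ)) x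
    have : ε ≤ ((f n : X →ᵇ ℝ)) x := hx
    linarith
  have hb2 : |F (h • v)| ≤ (‖((f 0 : X →ᵇ ℝ))‖ * ‖v‖) * sigF R F (O n) := by
    have h0 := abs_F_le hR hconst hnorm (F := F) (suppIn_smul h v hhsupp)
    refine le_trans h0 (mul_le_mul_of_nonneg_right ?_ (sigF_nonneg F _))
    have hhn : ‖(h : X →ᵇ ℝ)‖ ≤ ‖((f 0 : X →ᵇ ℝ))‖ := by
      apply (BoundedContinuousFunction.norm_le (norm_nonneg _)).2
      intro x
      rw [hhval, Real.norm_eq_abs, abs_le]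
      constructor
      · have h3 : min (((f n : X →ᵇ ℝ)) x) ε ≤ ((f n : X →ᵇ ℝ)) x := min_le_left _ _
        have h4 : (0:ℝ) ≤ ‖((f 0 : X →ᵇ ℝ))‖ := norm_nonneg _
        linarith
      · have h3 : (0:ℝ) ≤ min (((f n : X →ᵇ ℝ)) x) ε := le_min (hf0 n x) hεp.le
        linarith [hfb n x]
    calc ‖h • v‖ ≤ ‖(h : X →ᵇ ℝ)‖ * ‖v‖ := myNormSmulLe hnorm _ _
    _ ≤ ‖((f 0 : X →ᵇ ℝ))‖ * ‖v‖ := mul_le_mul_of_nonneg_right hhn (norm_nonneg v)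
  show ‖F ((f n) • v)‖ < δ
  rw [Real.norm_eq_abs, hsplit]
  have habs : |F (g • v) + F (h • v)| ≤ |F (g • v)| + |F (h • v)| := abs_add_le _ _
  have hεb : ‖F‖ * (ε * ‖v‖) ≤ δ/2 := by
    have h1 : ‖F‖ * ‖v‖ ≤ c₁ := by rw [hc₁]; linarith
    calc ‖F‖ * (ε * ‖v‖) = (‖F‖ * ‖v‖) * ε := by ring
    _ ≤ c₁ * ε := mul_le_mul_of_nonneg_right h1 hεp.le
    _ = δ/2 := by rw [hε]; field_simp
  have hOb : (‖((f 0 : X →ᵇ ℝ))‖ * ‖v‖) * sigF R F (O n) < δ/2 := by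
    have h1 : ‖((f 0 : X →ᵇ ℝ))‖ * ‖v‖ ≤ c₂ := by rw [hc₂]; linarith
    calc (‖((f 0 : X →ᵇ ℝ))‖ * ‖v‖) * sigF R F (O n)
        ≤ c₂ * sigF R F (O n) := mul_le_mul_of_nonneg_right h1 (sigF_nonneg F _)
    _ < c₂ * δ' := by
        apply mul_lt_mul_of_pos_left hn hc₂p
    _ = δ/2 := by rw [hδ']; field_simp
  linarith

end Aux6

/-- `F ∈ V'` is tight w.r.t. `R` iff the set function
`A ↦ sup{F(v) : ‖v‖ ≤ 1, supp v ⊆ A}` on open sets is the restriction of a finite Borel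
measure. -/
theorem statement12 {X : Type*} [MetricSpace X] [CompleteSpace X]
    [TopologicalSpace.SeparableSpace X] [MeasurableSpace X] [BorelSpace X]
    {V : Type*} [NormedAddCommGroup V] [NormedSpace ℝ V]
    (R : Subring (X →ᵇ ℝ)) [Module R V]
    (hR : ApproximatesOpenSets R) (hconst : ConstSMulCompat R V) (hnorm : NormSMulCompat R V)
    (F : V →L[ℝ] ℝ) :
    IsTight R F ↔
      ∃ μ : Measure X, IsFiniteMeasure μ ∧ ∀ A : Set X, IsOpen A →
        μ A = ENNReal.ofReal
          (sSup {r : ℝ | ∃ v : V, ‖v‖ ≤ 1 ∧ suppIn R v A ∧ r = F v}) := by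
  constructor
  · intro htight
    obtain ⟨μ, hfin, hμ⟩ := exists_measure hR hnorm htight
    exact ⟨μ, hfin, fun A hA => hμ A hA⟩
  · rintro ⟨μ, hfin, hμ⟩
    exact tight_of_measure hR hconst hnorm μ hfin (fun A hA => hμ A hA)
end
end

section
/- (Linear choice of Borel representatives on Polish spaces.) Let (X,d) be a complete separable metric space and m a σ-finite Borel measure on X. Then there exist maps Leb, assigning to each m-locally integrable Borel function f : X → ℝ a Borel set Leb(f) ⊆ X, and BorRep, assigning to each such f a Borel function BorRep(f) : X → ℝ, with the following properties: (0) if f = g m-a.e. then Leb(f) = Leb(g) and BorRep(f) = BorRep(g); (i) m(X ∖ Leb(f)) = 0; (ii) BorRep(f) = f m-a.e.; (iii) for locally integrable f, g and α, β ∈ ℝ one has Leb(f) ∩ Leb(g) ⊆ Leb(αf + βg) and BorRep(αf + βg)(x) = α BorRep(f)(x) + β BorRep(g)(x) for every x ∈ Leb(f) ∩ Leb(g); (iv) for every x ∈ Leb(f) one has |BorRep(f)(x)| ≤ inf_{r>0} ‖f‖_{L^∞(m restricted to B_r(x))}, where B_r(x) is the open metric ball and ‖·‖_{L^∞} denotes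 the m-essential supremum (possibly +∞). -/
/-!
Enumerate a countable basis of `X` as `t 0, t 1, …` and let the `n`-th partition consist of the
atoms of `t 0, …, t (n-1)`; its cells shrink to the points they contain. For a finite measure `μ`
the average of `f` over the cell of `x` is the conditional expectation of `f` (localised to an
open set where `f` is integrable) along the filtration generated by these partitions, which
exhausts the Borel σ-algebra, so by Lévy's upward theorem the averages converge to `f x` for
`μ`-a.e. `x`. `Leb f` is the set where they converge (and `f` is integrable on some cell) and
`BorRep f` is their limit. Averages are linear, only see the a.e.-class of `f`, and are bounded by
its essential supremum over any set containing the cell. Lévy's theorem needs a finite measure,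
so `m` is first replaced by a finite measure `μ ≤ m` with the same null sets.
-/

open Set Filter Topology MeasureTheory ProbabilityTheory TopologicalSpace ENNReal

section MemPartition

variable {α : Type*} {t : ℕ → Set α}

lemma memPartitionSet_succ_subset (t : ℕ → Set α) (n : ℕ) (a : α) :
    memPartitionSet t (n + 1) a ⊆ memPartitionSet t n a := by
  classical
  rw [memPartitionSet_succ]
  split_ifs
  exacts [inter_subset_left, sdiff_subset]

lemma antitone_memPartitionSet (t : ℕ → Set α) (a : α) :
    Antitone (memPartitionSet t · a) :=
  antitone_nat_of_succ_le (memPartitionSet_succ_subset t · a)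

lemma memPartitionSet_subset_of_mem {i n : ℕ} {a : α} (ha : a ∈ t i) (hin : i < n) :
    memPartitionSet t n a ⊆ t i := by
  classical
  refine (antitone_memPartitionSet t a hin).trans ?_
  change memPartitionSet t (i + 1) a ⊆ t i
  rw [memPartitionSet_succ, if_pos ha]
  exact inter_subset_right

lemma memPartitionSet_eq_of_mem {n : ℕ} {a b : α} (hb : b ∈ memPartitionSet t n a) :
    memPartitionSet t n b = memPartitionSet t n a :=
  memPartitionSet_of_mem (memPartitionSet_mem t n a) hb

variable [MeasurableSpace α]

lemma ae_pos_measure_memPartitionSet (μ : Measure α) (n : ℕ) :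
    ∀ᵐ a ∂μ, 0 < μ (memPartitionSet t n a) := by
  have hnull : {a | ¬ 0 < μ (memPartitionSet t n a)} ⊆
      ⋃ s ∈ {s ∈ memPartition t n | μ s = 0}, s := fun a ha =>
    mem_biUnion ⟨memPartitionSet_mem t n a, nonpos_iff_eq_zero.1 (not_lt.1 ha)⟩
      (mem_memPartitionSet t n a)
  exact measure_mono_null hnull <|
    (measure_biUnion_null_iff ((finite_memPartition t n).subset (sep_subset _ _)).countable).2
      fun _ hs => hs.2

lemma measurable_comp_memPartitionSet (ht : ∀ n, MeasurableSet (t n)) {β : Type*}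
    [MeasurableSpace β] (F : Set α → β) (n : ℕ) :
    Measurable fun a => F (memPartitionSet t n a) :=
  (measurable_from_top (f := fun s : memPartition t n => F s)).comp
    ((measurable_memPartitionSet_subtype ht n ⊤).mono ((partitionFiltration ht).le n) le_rfl)

variable (ht : ∀ n, MeasurableSet (t n))

lemma partitionFiltration_le_comap_memPartitionSet (n : ℕ) :
    partitionFiltration ht n ≤ MeasurableSpace.comap (memPartitionSet t n) ⊤ :=
  MeasurableSpace.generateFrom_le fun s hs =>
    ⟨{s}, trivial, by ext a; simp [memPartitionSet_eq_iff a hs]⟩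

lemma Measurable.eq_of_mem_memPartitionSet {β : Type*} [MeasurableSpace β]
    [MeasurableSingletonClass β] {n : ℕ} {u : α → β}
    (hu : Measurable[partitionFiltration ht n] u) {a b : α} (hb : b ∈ memPartitionSet t n a) :
    u b = u a := by
  obtain ⟨T, -, hT⟩ := partitionFiltration_le_comap_memPartitionSet ht n _
    (hu (measurableSet_singleton (u a)))
  have ha : a ∈ memPartitionSet t n ⁻¹' T := hT ▸ rfl
  change b ∈ u ⁻¹' {u a}
  rwa [← hT, mem_preimage, memPartitionSet_eq_of_mem hb]

lemma condExp_partitionFiltration_eq_setAverage {μ : Measure α} [IsFiniteMeasure μ]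
    {g : α → ℝ} (hg : Integrable g μ) {n : ℕ} {a : α} (ha : μ (memPartitionSet t n a) ≠ 0) :
    μ[g | partitionFiltration ht n] a = ⨍ x in memPartitionSet t n a, g x ∂μ := by
  have hconst : ∀ x ∈ memPartitionSet t n a,
      μ[g | partitionFiltration ht n] x = μ[g | partitionFiltration ht n] a :=
    fun x hx => stronglyMeasurable_condExp.measurable.eq_of_mem_memPartitionSet ht hx
  rw [← setAverage_const ha (measure_ne_top μ _) (μ[g | partitionFiltration ht n] a),
    ← setAverage_congr_fun (MeasurableSpace.measurableSet_memPartitionSet ht n a)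
      (ae_of_all _ hconst),
    setAverage_eq, setAverage_eq, setIntegral_condExp ((partitionFiltration ht).le n) hg
      (measurableSet_partitionFiltration_memPartitionSet ht n a)]

end MemPartition

lemma enorm_average_le_eLpNormEssSup {α E : Type*} [MeasurableSpace α] [NormedAddCommGroup E]
    [NormedSpace ℝ E] (μ : Measure α) (f : α → E) :
    ‖⨍ x, f x ∂μ‖ₑ ≤ eLpNormEssSup f μ :=
  (enorm_integral_le_lintegral_enorm f).trans (laverage_le_essSup _)

lemma exists_isFiniteMeasure_le_absolutelyContinuous {α : Type*} [MeasurableSpace α]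
    (m : Measure α) [SigmaFinite m] : ∃ μ : Measure α, IsFiniteMeasure μ ∧ μ ≤ m ∧ m ≪ μ := by
  obtain ⟨w, hw_pos, hw_meas, hw_int⟩ := exists_pos_lintegral_lt_of_sigmaFinite m one_ne_zero
  refine ⟨m.withDensity fun x => min (w x : ℝ≥0∞) 1, ?_, ?_, ?_⟩
  · exact isFiniteMeasure_withDensity
      ((lintegral_mono fun x => min_le_left _ _).trans_lt hw_int).ne_top
  · calc m.withDensity (fun x => min (w x : ℝ≥0∞) 1) ≤ m.withDensity 1 :=
          withDensity_mono (ae_of_all _ fun x => min_le_right _ _)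
      _ = m := withDensity_one
  · refine withDensity_absolutelyContinuous' (by fun_prop) (ae_of_all _ fun x => ?_)
    simpa using (hw_pos x).ne'

section Basis

variable {X : Type*} [TopologicalSpace X] {t : ℕ → Set X}

lemma eventually_memPartitionSet_subset (hb : IsTopologicalBasis (range t))
    {x : X} {U : Set X} (hU : U ∈ 𝓝 x) : ∀ᶠ n in atTop, memPartitionSet t n x ⊆ U := by
  obtain ⟨_, ⟨i, rfl⟩, hxi, hiU⟩ := hb.mem_nhds_iff.1 hU
  exact eventually_atTop.2
    ⟨i + 1, fun n hn => (memPartitionSet_subset_of_mem hxi hn).trans hiU⟩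

variable [SecondCountableTopology X] [MeasurableSpace X] [BorelSpace X]

lemma iSup_partitionFiltration_of_isTopologicalBasis (hb : IsTopologicalBasis (range t))
    (ht : ∀ n, MeasurableSet (t n)) : ⨆ n, partitionFiltration ht n = ‹MeasurableSpace X› :=
  iSup_partitionFiltration ht <| hb.borel_eq_generateFrom.symm.trans BorelSpace.measurable_eq.symm

end Basis

section PartitionAverage

variable {X : Type*} [MeasurableSpace X] {t : ℕ → Set X} {μ : Measure X} {f g : X → ℝ} {x : X}

noncomputable def partitionAverage (t : ℕ → Set X) (μ : Measure X) (f : X → ℝ) (n : ℕ)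
    (x : X) : ℝ :=
  ⨍ y in memPartitionSet t n x, f y ∂μ

lemma measurable_partitionAverage (ht : ∀ n, MeasurableSet (t n)) (f : X → ℝ) (n : ℕ) :
    Measurable (partitionAverage t μ f n) :=
  measurable_comp_memPartitionSet ht (fun s => ⨍ y in s, f y ∂μ) n

lemma partitionAverage_congr_ae (hfg : f =ᵐ[μ] g) :
    partitionAverage t μ f = partitionAverage t μ g := by
  ext n x
  simp only [partitionAverage, setAverage_eq, integral_congr_ae (ae_restrict_of_ae hfg)]

lemma partitionAverage_linearCombination (α β : ℝ) {n : ℕ}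
    (hf : IntegrableOn f (memPartitionSet t n x) μ)
    (hg : IntegrableOn g (memPartitionSet t n x) μ) :
    partitionAverage t μ (fun y => α * f y + β * g y) n x =
      α * partitionAverage t μ f n x + β * partitionAverage t μ g n x := by
  simp only [partitionAverage, setAverage_eq, integral_add (hf.const_mul α) (hg.const_mul β),
    integral_const_mul, smul_eq_mul]
  ring

variable [TopologicalSpace X]

lemma eventually_enorm_partitionAverage_le (hb : IsTopologicalBasis (range t))
    {U : Set X} (hU : U ∈ 𝓝 x) :
    ∀ᶠ n in atTop, ‖partitionAverage t μ f n x‖ₑ ≤ eLpNormEssSup f (μ.restrict U) := by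
  filter_upwards [eventually_memPartitionSet_subset hb hU] with n hn
  exact (enorm_average_le_eLpNormEssSup _ f).trans <| eLpNormEssSup_mono_measure f <|
    Measure.absolutelyContinuous_of_le (Measure.restrict_mono hn le_rfl)

variable [SecondCountableTopology X] [BorelSpace X] [IsFiniteMeasure μ]

theorem ae_tendsto_partitionAverage_of_integrableOn
    (hb : IsTopologicalBasis (range t)) (ht : ∀ n, MeasurableSet (t n)) (hf : Measurable f)
    {U : Set X} (hU : IsOpen U) (hfU : IntegrableOn f U μ) :
    ∀ᵐ x ∂μ, x ∈ U → Tendsto (partitionAverage t μ f · x) atTop (𝓝 (f x)) := by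
  have hg : Integrable (U.indicator f) μ := (integrable_indicator_iff hU.measurableSet).2 hfU
  have hg_meas : StronglyMeasurable[⨆ n, partitionFiltration ht n] (U.indicator f) := by
    rw [iSup_partitionFiltration_of_isTopologicalBasis hb ht]
    exact (hf.indicator hU.measurableSet).stronglyMeasurable
  filter_upwards [hg.tendsto_ae_condExp hg_meas,
    ae_all_iff.2 (ae_pos_measure_memPartitionSet (t := t) μ)] with x hlim hpos hxU
  rw [indicator_of_mem hxU] at hlim
  refine hlim.congr' ?_
  filter_upwards [eventually_memPartitionSet_subset hb (hU.mem_nhds hxU)] with n hn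
  rw [condExp_partitionFiltration_eq_setAverage ht hg (hpos n).ne', partitionAverage]
  exact setAverage_congr_fun (MeasurableSpace.measurableSet_memPartitionSet ht n x)
    (ae_of_all _ fun y hy => indicator_of_mem (hn hy) f)

theorem ae_tendsto_partitionAverage (hb : IsTopologicalBasis (range t))
    (ht : ∀ n, MeasurableSet (t n)) (hf : Measurable f) (hloc : LocallyIntegrable f μ) :
    ∀ᵐ x ∂μ, Tendsto (partitionAverage t μ f · x) atTop (𝓝 (f x)) := by
  obtain ⟨u, hu_open, hu_cover, hu_int⟩ := hloc.exists_nat_integrableOn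
  filter_upwards [ae_all_iff.2 fun i =>
    ae_tendsto_partitionAverage_of_integrableOn hb ht hf (hu_open i) (hu_int i)] with x hx
  obtain ⟨i, hxi⟩ := mem_iUnion.1 (hu_cover ▸ mem_univ x)
  exact hx i hxi

end PartitionAverage

section LebesgueSet

variable {X : Type*} [MeasurableSpace X] {t : ℕ → Set X} {μ : Measure X} {f g : X → ℝ} {x : X}

def lebesgueSet (t : ℕ → Set X) (μ : Measure X) (f : X → ℝ) : Set X :=
  {x | (∃ n, IntegrableOn f (memPartitionSet t n x) μ) ∧
    ∃ c, Tendsto (partitionAverage t μ f · x) atTop (𝓝 c)}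

noncomputable def lebesgueRep (t : ℕ → Set X) (μ : Measure X) (f : X → ℝ) (x : X) : ℝ :=
  limUnder atTop (partitionAverage t μ f · x)

lemma measurableSet_lebesgueSet (ht : ∀ n, MeasurableSet (t n)) (f : X → ℝ) :
    MeasurableSet (lebesgueSet t μ f) :=
  (measurableSet_setOfPred.2 (.exists fun n =>
    measurable_comp_memPartitionSet ht (IntegrableOn f · μ) n)).inter
    (measurableSet_exists_tendsto (measurable_partitionAverage ht f))

lemma measurable_lebesgueRep (ht : ∀ n, MeasurableSet (t n)) (f : X → ℝ) :
    Measurable (lebesgueRep t μ f) :=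
  (StronglyMeasurable.limUnder fun n =>
    (measurable_partitionAverage ht f n).stronglyMeasurable).measurable

lemma tendsto_lebesgueRep (hx : x ∈ lebesgueSet t μ f) :
    Tendsto (partitionAverage t μ f · x) atTop (𝓝 (lebesgueRep t μ f x)) :=
  tendsto_nhds_limUnder hx.2

lemma lebesgueSet_congr_ae (hfg : f =ᵐ[μ] g) : lebesgueSet t μ f = lebesgueSet t μ g := by
  ext x
  simp only [lebesgueSet, mem_ofPred_eq, partitionAverage_congr_ae hfg]
  exact and_congr_left' (exists_congr fun n => integrable_congr (ae_restrict_of_ae hfg))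

lemma lebesgueRep_congr_ae (hfg : f =ᵐ[μ] g) : lebesgueRep t μ f = lebesgueRep t μ g := by
  ext x
  simp only [lebesgueRep, partitionAverage_congr_ae hfg]

lemma eventually_integrableOn_memPartitionSet (hx : x ∈ lebesgueSet t μ f) :
    ∀ᶠ n in atTop, IntegrableOn f (memPartitionSet t n x) μ := by
  obtain ⟨N, hN⟩ := hx.1
  exact eventually_atTop.2 ⟨N, fun n hn => hN.mono_set (antitone_memPartitionSet t x hn)⟩

lemma tendsto_partitionAverage_linearCombination (α β : ℝ) (hf : x ∈ lebesgueSet t μ f)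
    (hg : x ∈ lebesgueSet t μ g) :
    Tendsto (partitionAverage t μ (fun y => α * f y + β * g y) · x) atTop
      (𝓝 (α * lebesgueRep t μ f x + β * lebesgueRep t μ g x)) := by
  refine (((tendsto_lebesgueRep hf).const_mul α).add
    ((tendsto_lebesgueRep hg).const_mul β)).congr' ?_
  filter_upwards [eventually_integrableOn_memPartitionSet hf,
    eventually_integrableOn_memPartitionSet hg] with n hfn hgn
  exact (partitionAverage_linearCombination α β hfn hgn).symm

lemma mem_lebesgueSet_linearCombination (α β : ℝ) (hf : x ∈ lebesgueSet t μ f)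
    (hg : x ∈ lebesgueSet t μ g) : x ∈ lebesgueSet t μ (fun y => α * f y + β * g y) := by
  obtain ⟨n, hfn, hgn⟩ := ((eventually_integrableOn_memPartitionSet hf).and
    (eventually_integrableOn_memPartitionSet hg)).exists
  exact ⟨⟨n, (hfn.const_mul α).add (hgn.const_mul β)⟩, _,
    tendsto_partitionAverage_linearCombination α β hf hg⟩

lemma lebesgueRep_linearCombination (α β : ℝ) (hf : x ∈ lebesgueSet t μ f)
    (hg : x ∈ lebesgueSet t μ g) :
    lebesgueRep t μ (fun y => α * f y + β * g y) x =
      α * lebesgueRep t μ f x + β * lebesgueRep t μ g x :=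
  (tendsto_partitionAverage_linearCombination α β hf hg).limUnder_eq

variable [TopologicalSpace X]

lemma enorm_lebesgueRep_le (hb : IsTopologicalBasis (range t)) (hx : x ∈ lebesgueSet t μ f)
    {U : Set X} (hU : U ∈ 𝓝 x) :
    ‖lebesgueRep t μ f x‖ₑ ≤ eLpNormEssSup f (μ.restrict U) :=
  le_of_tendsto ((continuous_enorm.tendsto _).comp (tendsto_lebesgueRep hx))
    (eventually_enorm_partitionAverage_le hb hU)

variable [SecondCountableTopology X] [BorelSpace X] [IsFiniteMeasure μ]

lemma lebesgueRep_ae_eq (hb : IsTopologicalBasis (range t))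
    (ht : ∀ n, MeasurableSet (t n)) (hf : Measurable f) (hloc : LocallyIntegrable f μ) :
    lebesgueRep t μ f =ᵐ[μ] f := by
  filter_upwards [ae_tendsto_partitionAverage hb ht hf hloc] with x hx
  exact hx.limUnder_eq

lemma ae_mem_lebesgueSet (hb : IsTopologicalBasis (range t))
    (ht : ∀ n, MeasurableSet (t n)) (hf : Measurable f) (hloc : LocallyIntegrable f μ) :
    ∀ᵐ x ∂μ, x ∈ lebesgueSet t μ f := by
  filter_upwards [ae_tendsto_partitionAverage hb ht hf hloc] with x hx
  obtain ⟨U, hU, hfU⟩ := hloc x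
  obtain ⟨n, hn⟩ := (eventually_memPartitionSet_subset hb hU).exists
  exact ⟨⟨n, hfU.mono_set hn⟩, _, hx⟩

end LebesgueSet

theorem statement19_general {X : Type*} [MetricSpace X]
    [TopologicalSpace.SeparableSpace X] [MeasurableSpace X] [BorelSpace X]
    (m : Measure X) [SigmaFinite m] :
    ∃ (Leb : (X → ℝ) → Set X) (BorRep : (X → ℝ) → X → ℝ),
      -- (0) dependence only on the a.e.-class
      (∀ f g : X → ℝ, Measurable f → LocallyIntegrable f m →
        Measurable g → LocallyIntegrable g m → f =ᵐ[m] g →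
        Leb f = Leb g ∧ BorRep f = BorRep g) ∧
      (∀ f : X → ℝ, Measurable f → LocallyIntegrable f m →
        MeasurableSet (Leb f) ∧ Measurable (BorRep f) ∧
        -- (i)
        m (Leb f)ᶜ = 0 ∧
        -- (ii)
        BorRep f =ᵐ[m] f ∧
        -- (iv)
        ∀ x ∈ Leb f, (‖BorRep f x‖₊ : ℝ≥0∞) ≤
          ⨅ (r : ℝ) (_ : 0 < r), eLpNormEssSup f (m.restrict (Metric.ball x r))) ∧
      -- (iii)
      ∀ (f g : X → ℝ) (α β : ℝ), Measurable f → LocallyIntegrable f m →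
        Measurable g → LocallyIntegrable g m →
        Leb f ∩ Leb g ⊆ Leb (fun x => α * f x + β * g x) ∧
        ∀ x ∈ Leb f ∩ Leb g,
          BorRep (fun y => α * f y + β * g y) x = α * BorRep f x + β * BorRep g x := by
  obtain ⟨t, hb⟩ := exists_seq_basis X
  have ht : ∀ n, MeasurableSet (t n) := fun n => (hb.isOpen (mem_range_self n)).measurableSet
  obtain ⟨μ, _, hμm, hmμ⟩ := exists_isFiniteMeasure_le_absolutelyContinuous m
  have hμm_ac : μ ≪ m := Measure.absolutelyContinuous_of_le hμm
  refine ⟨lebesgueSet t μ, lebesgueRep t μ, fun f g _ _ _ _ hfg => ?_, fun f hf hloc => ?_,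
    fun f g α β _ _ _ _ => ?_⟩
  · exact ⟨lebesgueSet_congr_ae (hμm_ac.ae_eq hfg), lebesgueRep_congr_ae (hμm_ac.ae_eq hfg)⟩
  · have hlocμ := hloc.mono_measure hμm
    refine ⟨measurableSet_lebesgueSet ht f, measurable_lebesgueRep ht f,
      hmμ (ae_mem_lebesgueSet hb ht hf hlocμ), hmμ.ae_eq (lebesgueRep_ae_eq hb ht hf hlocμ),
      fun x hx => le_iInf₂ fun r hr => ?_⟩
    exact (enorm_lebesgueRep_le hb hx (Metric.ball_mem_nhds x hr)).trans <|
      eLpNormEssSup_mono_measure f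
        (Measure.absolutelyContinuous_of_le (Measure.restrict_mono subset_rfl hμm))
  · exact ⟨fun x hx => mem_lebesgueSet_linearCombination α β hx.1 hx.2,
      fun x hx => lebesgueRep_linearCombination α β hx.1 hx.2⟩

/-- linear choice of Borel representatives on Polish spaces: for a
σ-finite Borel measure `m` on a complete separable metric space `X` there are maps
`Leb` and `BorRep` on the `m`-locally integrable Borel functions such that: (0) they
only depend on the a.e.-class; (i) `Leb f` is Borel of full measure; (ii) `BorRep f` is
a Borel representative of `f`; (iii) they are pointwise linear on `Leb f ∩ Leb g`;
(iv) `|BorRep f x| ≤ inf_{r>0} ‖f‖_{L^∞(m|B_r(x))}` for `x ∈ Leb f`. -/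
theorem statement19 {X : Type*} [MetricSpace X] [CompleteSpace X]
    [TopologicalSpace.SeparableSpace X] [MeasurableSpace X] [BorelSpace X]
    (m : Measure X) [SigmaFinite m] :
    ∃ (Leb : (X → ℝ) → Set X) (BorRep : (X → ℝ) → X → ℝ),
      -- (0) dependence only on the a.e.-class
      (∀ f g : X → ℝ, Measurable f → LocallyIntegrable f m →
        Measurable g → LocallyIntegrable g m → f =ᵐ[m] g →
        Leb f = Leb g ∧ BorRep f = BorRep g) ∧
      (∀ f : X → ℝ, Measurable f → LocallyIntegrable f m →
        MeasurableSet (Leb f) ∧ Measurable (BorRep f) ∧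
        -- (i)
        m (Leb f)ᶜ = 0 ∧
        -- (ii)
        BorRep f =ᵐ[m] f ∧
        -- (iv)
        ∀ x ∈ Leb f, (‖BorRep f x‖₊ : ℝ≥0∞) ≤
          ⨅ (r : ℝ) (_ : 0 < r), eLpNormEssSup f (m.restrict (Metric.ball x r))) ∧
      -- (iii)
      ∀ (f g : X → ℝ) (α β : ℝ), Measurable f → LocallyIntegrable f m →
        Measurable g → LocallyIntegrable g m →
        Leb f ∩ Leb g ⊆ Leb (fun x => α * f x + β * g x) ∧
        ∀ x ∈ Leb f ∩ Leb g,
          BorRep (fun y => α * f y + β * g y) x = α * BorRep f x + β * BorRep g x :=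
  statement19_general m
end
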